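/- An integral domain D is a ∗-Prüfer domain if and only if every nonzero ideal of D generated by two elements is ∗-invertible. -/

import Mathlib

/-!
Ideal addition is idempotent, so `(A + B)(A + C)(B + C) = (A + B + C)(AB + AC + BC)`. A product
of `∗`-invertible ideals is `∗`-invertible, and so is each factor of a `∗`-invertible product.
Taking `A = (x)`, `B = (y)` and `C` generated by the remaining generators, `A + B + C` is
`∗`-invertible once the two-generated `A + B` and the ideals `A + C`, `B + C` with fewer
generators are; induction on the number of generators then reaches every finitely generated
ideal. Fractional generators are made integral by clearing a common denominator.
-/

open FractionalIdeal

/-- A star operation on an integral domain `D` with fraction field `K`, acting on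
fractional ideals: it fixes `D`, is extensive, monotone, idempotent (all on nonzero
ideals), and commutes with multiplication by nonzero principal fractional ideals. -/
structure StarOp (D : Type*) [CommRing D] [IsDomain D] (K : Type*) [Field K]
    [Algebra D K] [IsFractionRing D K] where
  star : FractionalIdeal (nonZeroDivisors D) K → FractionalIdeal (nonZeroDivisors D) K
  star_one : star 1 = 1
  le_star : ∀ {A}, A ≠ 0 → A ≤ star A
  star_mono : ∀ {A B}, A ≠ 0 → A ≤ B → star A ≤ star B
  star_idem : ∀ {A}, A ≠ 0 → star (star A) = star A
  star_smul : ∀ {A : FractionalIdeal (nonZeroDivisors D) K} (x : K), x ≠ 0 → A ≠ 0 →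
    star (spanSingleton (nonZeroDivisors D) x * A) = spanSingleton (nonZeroDivisors D) x * star A

variable {D K : Type*} [CommRing D] [IsDomain D] [Field K] [Algebra D K] [IsFractionRing D K]

open scoped nonZeroDivisors

theorem add_mul_add_mul_add {α : Type*} [IdemCommSemiring α] (a b c : α) :
    (a + b) * (a + c) * (b + c) = (a + b + c) * (a * b + a * c + b * c) := by
  calc (a + b) * (a + c) * (b + c)
      = a * a * b + a * a * c + a * b * b + b * b * c + a * c * c + b * c * c
        + (a * b * c + a * b * c) := by ring
    _ = a * a * b + a * a * c + a * b * b + b * b * c + a * c * c + b * c * c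
        + (a * b * c + a * b * c + a * b * c) := by rw [add_idem, add_idem]
    _ = (a + b + c) * (a * b + a * c + b * c) := by ring

namespace FractionalIdeal

instance {R P : Type*} [CommRing R] [CommRing P] [Algebra R P] {S : Submonoid R} :
    IdemCommSemiring (FractionalIdeal S P) :=
  { (inferInstance : CommSemiring (FractionalIdeal S P)),
    (inferInstance : SemilatticeSup (FractionalIdeal S P)),
    (inferInstance : OrderBot (FractionalIdeal S P)) with
    add_eq_sup := fun A B => (sup_eq_add A B).symm }

instance {R P : Type*} [CommRing R] [CommRing P] [NoZeroDivisors P] [Algebra R P]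
    {S : Submonoid R} : NoZeroDivisors (FractionalIdeal S P) where
  eq_zero_or_eq_zero_of_mul_eq_zero {A B} hAB := by
    by_contra! h
    obtain ⟨a, ha, ha0⟩ := Submodule.exists_mem_ne_zero_of_ne_bot (coeToSubmodule_ne_bot.mpr h.1)
    obtain ⟨b, hb, hb0⟩ := Submodule.exists_mem_ne_zero_of_ne_bot (coeToSubmodule_ne_bot.mpr h.2)
    exact mul_ne_zero ha0 hb0 ((mem_zero_iff _).mp (hAB ▸ mul_mem_mul ha hb))

theorem mul_inv_ne_zero {A : FractionalIdeal D⁰ K} (hA : A ≠ 0) : A * A⁻¹ ≠ 0 :=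
  (bot_lt_mul_inv hA).ne'

theorem inv_mul_inv_le {A B : FractionalIdeal D⁰ K} (hAB : A * B ≠ 0) :
    A⁻¹ * B⁻¹ ≤ (A * B)⁻¹ := by
  rw [inv_eq (I := A * B), le_div_iff_mul_le hAB,
    show A⁻¹ * B⁻¹ * (A * B) = A * A⁻¹ * (B * B⁻¹) by ring]
  calc A * A⁻¹ * (B * B⁻¹) ≤ 1 * 1 := mul_le_mul' mul_one_div_le_one mul_one_div_le_one
    _ = 1 := one_mul _

theorem mul_inv_mul_le_inv {A B : FractionalIdeal D⁰ K} (hA : A ≠ 0) :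
    B * (A * B)⁻¹ ≤ A⁻¹ := by
  rw [inv_eq (I := A), le_div_iff_mul_le hA, show B * (A * B)⁻¹ * A = A * B * (A * B)⁻¹ by ring]
  exact mul_one_div_le_one

theorem spanFinset_insert {R : Type*} [CommRing R] [Algebra R K] [IsFractionRing R K]
    {ι : Type*} [DecidableEq ι] (i : ι) (T : Finset ι) (f : ι → K) :
    spanFinset R (insert i T) f = spanSingleton R⁰ (f i) + spanFinset R T f := by
  rw [← coeToSubmodule_inj, coe_add, coe_spanSingleton, spanFinset_coe, spanFinset_coe,
    Finset.coe_insert, Set.image_insert_eq, Submodule.span_insert, Submodule.add_eq_sup]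

theorem exists_eq_spanFinset_of_fg {R : Type*} [CommRing R] [Algebra R K] [IsFractionRing R K]
    {F : FractionalIdeal R⁰ K} (hF : (F : Submodule R K).FG) :
    ∃ T : Finset K, F = spanFinset R T id := by
  obtain ⟨T, hT⟩ := hF
  refine ⟨T, coeToSubmodule_injective ?_⟩
  simp only [spanFinset_coe, Set.image_id, hT]

end FractionalIdeal

namespace StarOp

variable (s : StarOp D K)

def IsInvertible (A : FractionalIdeal D⁰ K) : Prop :=
  s.star (A * A⁻¹) = 1

variable {s} {A B : FractionalIdeal D⁰ K}

theorem star_ne_zero (hA : A ≠ 0) : s.star A ≠ 0 :=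
  ne_bot_of_le_ne_bot hA (s.le_star hA)

theorem star_le_one (hA : A ≠ 0) (hA1 : A ≤ 1) : s.star A ≤ 1 :=
  s.star_one ▸ s.star_mono hA hA1

theorem star_mul_le (hA : A ≠ 0) : s.star A * B ≤ s.star (A * B) := by
  refine mul_le.mpr fun x hx y hy => ?_
  rcases eq_or_ne y 0 with rfl | hy0
  · rw [mul_zero]; exact zero_mem _
  have hyA : spanSingleton D⁰ y * A ≤ A * B := by
    rw [mul_comm]; exact mul_le_mul_right (spanSingleton_le_iff_mem.mpr hy) A
  have hyA0 : spanSingleton D⁰ y * A ≠ 0 := mul_ne_zero (spanSingleton_ne_zero_iff.mpr hy0) hA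
  have hxy : y * x ∈ spanSingleton D⁰ y * s.star A := mul_mem_mul (mem_spanSingleton_self _ y) hx
  rw [mul_comm x y]
  exact (s.star_smul y hy0 hA ▸ s.star_mono hyA0 hyA) hxy

theorem star_star_mul (hA : A ≠ 0) (hB : B ≠ 0) : s.star (s.star A * B) = s.star (A * B) := by
  refine le_antisymm ?_ (s.star_mono (mul_ne_zero hA hB) (mul_le_mul_left (s.le_star hA) B))
  calc s.star (s.star A * B) ≤ s.star (s.star (A * B)) :=
        s.star_mono (mul_ne_zero (star_ne_zero hA) hB) (star_mul_le hA)
    _ = s.star (A * B) := s.star_idem (mul_ne_zero hA hB)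

theorem star_mul_eq_one (hA : A ≠ 0) (hB : B ≠ 0) (hA1 : s.star A = 1) (hB1 : s.star B = 1) :
    s.star (A * B) = 1 := by
  rw [← star_star_mul hA hB, hA1, one_mul, hB1]

theorem IsInvertible.of_le {C : FractionalIdeal D⁰ K} (hC : C ≠ 0) (hCA : C ≤ A * A⁻¹)
    (hC1 : s.star C = 1) : s.IsInvertible A :=
  le_antisymm (star_le_one (ne_bot_of_le_ne_bot hC hCA) mul_one_div_le_one)
    (hC1 ▸ s.star_mono hC hCA)

theorem IsInvertible.mul (hA : A ≠ 0) (hB : B ≠ 0) (iA : s.IsInvertible A)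
    (iB : s.IsInvertible B) : s.IsInvertible (A * B) := by
  refine .of_le (mul_ne_zero (mul_inv_ne_zero hA) (mul_inv_ne_zero hB)) ?_
    (star_mul_eq_one (mul_inv_ne_zero hA) (mul_inv_ne_zero hB) iA iB)
  calc A * A⁻¹ * (B * B⁻¹) = A * B * (A⁻¹ * B⁻¹) := by ring
    _ ≤ A * B * (A * B)⁻¹ := mul_le_mul_right (inv_mul_inv_le (mul_ne_zero hA hB)) _

theorem IsInvertible.of_mul (hAB : A * B ≠ 0) (i : s.IsInvertible (A * B)) : s.IsInvertible A := by
  refine .of_le (mul_inv_ne_zero hAB) ?_ i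
  calc A * B * (A * B)⁻¹ = A * (B * (A * B)⁻¹) := mul_assoc A B _
    _ ≤ A * A⁻¹ := mul_le_mul_right (mul_inv_mul_le_inv (left_ne_zero_of_mul hAB)) A

theorem isInvertible_spanSingleton_add_spanSingleton
    (h : ∀ a b : D, spanSingleton D⁰ (algebraMap D K a) + spanSingleton D⁰ (algebraMap D K b) ≠ 0 →
      s.IsInvertible (spanSingleton D⁰ (algebraMap D K a) + spanSingleton D⁰ (algebraMap D K b)))
    (x y : K) (hxy : spanSingleton D⁰ x + spanSingleton D⁰ y ≠ 0) :
    s.IsInvertible (spanSingleton D⁰ x + spanSingleton D⁰ y) := by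
  obtain ⟨a, b, d, hxa, hyb⟩ := IsLocalization.surj₂ D⁰ K x y
  have hd : algebraMap D K d ≠ 0 := IsFractionRing.to_map_ne_zero_of_mem_nonZeroDivisors d.2
  have hscale : (spanSingleton D⁰ x + spanSingleton D⁰ y) * spanSingleton D⁰ (algebraMap D K d) =
      spanSingleton D⁰ (algebraMap D K a) + spanSingleton D⁰ (algebraMap D K b) := by
    rw [add_mul, spanSingleton_mul_spanSingleton, spanSingleton_mul_spanSingleton, hxa, hyb]
  have hscale0 := mul_ne_zero hxy (spanSingleton_ne_zero_iff.mpr hd)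
  exact .of_mul hscale0 (hscale ▸ h a b (hscale ▸ hscale0))

theorem isInvertible_spanSingleton_add_spanFinset
    (h : ∀ x y : K, spanSingleton D⁰ x + spanSingleton D⁰ y ≠ 0 →
      s.IsInvertible (spanSingleton D⁰ x + spanSingleton D⁰ y))
    (T : Finset K) (x : K) (hT : spanSingleton D⁰ x + spanFinset D T id ≠ 0) :
    s.IsInvertible (spanSingleton D⁰ x + spanFinset D T id) := by
  classical
  induction T using Finset.induction_on generalizing x with
  | empty =>
    have hempty : spanFinset D (∅ : Finset K) id = spanSingleton D⁰ 0 := by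
      rw [spanSingleton_zero, spanFinset_eq_zero]
      simp
    rw [hempty] at hT ⊢
    exact h x 0 hT
  | insert y T _ ih =>
    rw [spanFinset_insert, id] at hT ⊢
    set A := spanSingleton D⁰ x
    set B := spanSingleton D⁰ y
    set C := spanFinset D T id
    rcases eq_or_ne C 0 with hC | hC
    · rw [hC, add_zero] at hT ⊢
      exact h x y hT
    rcases eq_or_ne (A + B) 0 with hAB | hAB
    · rw [(add_eq_zero.mp hAB).2, zero_add] at hT ⊢
      exact ih x hT
    have hAC : A + C ≠ 0 := ne_bot_of_le_ne_bot hC le_add_self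
    have hBC : B + C ≠ 0 := ne_bot_of_le_ne_bot hC le_add_self
    have hprod0 : (A + B) * (A + C) * (B + C) ≠ 0 := mul_ne_zero (mul_ne_zero hAB hAC) hBC
    have hprod : s.IsInvertible ((A + B) * (A + C) * (B + C)) :=
      .mul (mul_ne_zero hAB hAC) hBC (.mul hAB hAC (h x y hAB) (ih x hAC)) (ih y hBC)
    rw [add_mul_add_mul_add] at hprod0 hprod
    rw [← add_assoc]
    exact .of_mul hprod0 hprod

end StarOp

/-- `D` is a `∗`-Prüfer domain iff every nonzero ideal of `D` generated by two
elements is `∗`-invertible. -/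
theorem starPrufer_iff_twoGenerated_invertible (s : StarOp D K) :
    (∀ F : FractionalIdeal (nonZeroDivisors D) K, F ≠ 0 → (F : Submodule D K).FG → s.star (F * F⁻¹) = 1) ↔
    (∀ a b : D,
      spanSingleton (nonZeroDivisors D) (algebraMap D K a) +
        spanSingleton (nonZeroDivisors D) (algebraMap D K b) ≠ 0 →
      s.star ((spanSingleton (nonZeroDivisors D) (algebraMap D K a) +
          spanSingleton (nonZeroDivisors D) (algebraMap D K b)) *
        (spanSingleton (nonZeroDivisors D) (algebraMap D K a) +
          spanSingleton (nonZeroDivisors D) (algebraMap D K b))⁻¹) = 1) := by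
  refine ⟨fun h a b hab => h _ hab ?_, fun h F hF hFG => ?_⟩
  · rw [coe_add, coe_spanSingleton, coe_spanSingleton, Submodule.add_eq_sup]
    exact (Submodule.fg_span_singleton _).sup (Submodule.fg_span_singleton _)
  · obtain ⟨T, rfl⟩ := exists_eq_spanFinset_of_fg hFG
    have hinv := StarOp.isInvertible_spanSingleton_add_spanFinset
      (StarOp.isInvertible_spanSingleton_add_spanSingleton h) T 0
    rw [spanSingleton_zero, zero_add] at hinv
    exact hinv hF
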